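/- arXiv:1312.0436 — 2 statements merged into one kernel-verified Lean document; each statement's English description precedes it below -/
import Mathlib

section
/- Let γ > 1, ε ∈ ℝ, and for r > 0 define δT(r) = −((γ−1)ε²/(8γπ²))·e^{1−r²}, ρ(r) = (1+δT(r))^{1/(γ−1)}, p(r) = (1+δT(r))^{γ/(γ−1)} and tangential velocity v_θ(r) = (ε/(2π))·e^{(1−r²)/2}·r. Assume 1 + δT(r) > 0 for all r > 0. Then the radial momentum balance p'(r) = ρ(r)·v_θ(r)²/r holds for every r > 0; i.e., the pressure gradient of the isentropic vortex exactly balances the centrifugal force, so the vortex is a stationary solution of the Euler equations in the comoving frame. -/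
/-!
Write `θ = 1 + δT` for the temperature. Then `ρ = θ ^ (1 / (γ - 1))` and `p = θ ^ (γ / (γ - 1))`,
so the chain rule gives `p' = γ / (γ - 1) · ρ · θ'`, and the balance reduces to
`γ / (γ - 1) · θ' = v_θ² / r`. Both sides equal `ε² / (4π²) · r · e^(1 - r²)`.
-/

open Real

theorem HasDerivAt.rpow_div_sub_one {θ : ℝ → ℝ} {θ' γ r : ℝ} (hθ : HasDerivAt θ θ' r)
    (hθr : θ r ≠ 0) (hγ : γ ≠ 1) :
    HasDerivAt (fun x => θ x ^ (γ / (γ - 1))) (γ / (γ - 1) * θ r ^ (1 / (γ - 1)) * θ') r := by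
  have hexp : γ / (γ - 1) - 1 = 1 / (γ - 1) := by
    field_simp [sub_ne_zero.mpr hγ]
    ring
  convert hθ.rpow_const (p := γ / (γ - 1)) (Or.inl hθr) using 1
  rw [hexp]
  ring

theorem hasDerivAt_one_add_neg_mul_exp_one_sub_sq (C r : ℝ) :
    HasDerivAt (fun x => 1 + -C * exp (1 - x ^ 2)) (2 * C * r * exp (1 - r ^ 2)) r := by
  refine ((((hasDerivAt_pow 2 r).const_sub 1).exp.const_mul (-C)).const_add 1).congr_deriv ?_
  push_cast
  ring

/-- for the stationary isentropic vortex, the pressure gradient exactly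
balances the centrifugal force: p'(r) = ρ(r)·v_θ(r)²/r for every r > 0; hence the
vortex is a stationary solution of the Euler equations in the comoving frame. -/
theorem isentropic_vortex_radial_momentum_balance
    (γ ε : ℝ) (hγ : 1 < γ)
    (δT ρ p vθ : ℝ → ℝ)
    (hδT : ∀ r, δT r = -((γ - 1) * ε ^ 2 / (8 * γ * Real.pi ^ 2)) * Real.exp (1 - r ^ 2))
    (hρ : ∀ r, ρ r = (1 + δT r) ^ (1 / (γ - 1)))
    (hp : ∀ r, p r = (1 + δT r) ^ (γ / (γ - 1)))
    (hvθ : ∀ r, vθ r = ε / (2 * Real.pi) * Real.exp ((1 - r ^ 2) / 2) * r)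
    (hpos : ∀ r : ℝ, 0 < r → 0 < 1 + δT r) :
    ∀ r : ℝ, 0 < r → deriv p r = ρ r * (vθ r) ^ 2 / r := by
  intro r hr
  have hθ : HasDerivAt (fun x => 1 + δT x)
      (2 * ((γ - 1) * ε ^ 2 / (8 * γ * π ^ 2)) * r * exp (1 - r ^ 2)) r := by
    simpa only [hδT] using hasDerivAt_one_add_neg_mul_exp_one_sub_sq _ r
  have hp' := hθ.rpow_div_sub_one (hpos r hr).ne' hγ.ne'
  rw [funext hp, hp'.deriv, ← hρ, hvθ, mul_pow, mul_pow, exp_half, sq_sqrt (exp_pos _).le]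
  have hγ1 : γ - 1 ≠ 0 := sub_ne_zero.mpr hγ.ne'
  field_simp [hγ1, (zero_lt_one.trans hγ).ne', pi_ne_zero, hr.ne']
  ring
end

section
/- Let 0 < r_i < r_e, 0 < ρ_i < ρ_e, set γ = 2 and uniform entropy s₀ = 1 (so p = ρ²), and define ρ₀(r) = ρ_i + ((r² − r_i²)/(r_e² − r_i²))·(ρ_e − ρ_i), the sound speeds c_{i,e}² = γ·ρ_{i,e} = 2ρ_{i,e}, the focalisation time τ = √( ((γ−1)/2)·(r_e² − r_i²)/(c_e² − c_i²) ), and the homothety rate h(t) = √(1 − t²/τ²) for 0 ≤ t < τ. Define the Eulerian fields at radius R ∈ [h(t)·r_i, h(t)·r_e]: density ρ(R,t) = ρ₀(R/h(t))/h(t)², radial velocity U(R,t) = h'(t)·R/h(t) = −tR/(τ²h(t)²), and pressure p(R,t) = ρ(R,t)². Then these fields satisfy the cylindrically symmetric isentropic Euler equations: the continuity equation ∂_t ρ + (1/R)·∂_R(R ρ U) = 0 and the radial momentum equation ∂_t U + U ∂_R U + (1/ρ)∂_R p = 0 hold at every point of the shell for 0 ≤ t < τ. This is Kidder's self-similar isentropic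 compression solution, in which each fluid particle initially at radius r is located at R(r,t) = h(t)·r. -/
/-!
Write `g(t) = h(t)² = 1 - t²/τ²` and `ρ₀(r) = C + A r²`. The Eulerian fields are then the rational
functions `ρ = (C + A R²/g)/g` and `U = -tR/(τ² g)`. The continuity equation holds for every `C` and
`A`: particles move on the rays `R = h(t) r`, so the mass between two rays is conserved. In the
momentum equation the acceleration `∂ₜU + U ∂_R U = R h''/h` equals `-R/(τ² g²)`, while for `p = ρ²`
the pressure force is `(1/ρ) ∂_R p = 2 ∂_R ρ = 4AR/g²`; they balance exactly when `A = 1/(4τ²)`,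
which is how the focalisation time `τ` is defined.
-/

noncomputable section

/-- Partial derivative with respect to the first (radial) argument. -/
def dR (f : ℝ → ℝ → ℝ) (r t : ℝ) : ℝ := deriv (fun s => f s t) r
/-- Partial derivative with respect to the second (time) argument. -/
def dT (f : ℝ → ℝ → ℝ) (r t : ℝ) : ℝ := deriv (fun s => f r s) t

open Filter Topology

theorem dT_congr {f g : ℝ → ℝ → ℝ} {t : ℝ} (hfg : ∀ᶠ s in 𝓝 t, ∀ r, f r s = g r s) (r : ℝ) :
    dT f r t = dT g r t :=
  EventuallyEq.deriv_eq (hfg.mono fun _ hs => hs r)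

theorem dR_congr {f g : ℝ → ℝ → ℝ} {t : ℝ} (hfg : ∀ᶠ s in 𝓝 t, ∀ r, f r s = g r s) (r : ℝ) :
    dR f r t = dR g r t := by
  simp only [dR, hfg.self_of_nhds]

def homothetySq (τ t : ℝ) : ℝ := 1 - t ^ 2 / τ ^ 2

def kidderDensity (C A τ R t : ℝ) : ℝ := (C + A * (R ^ 2 / homothetySq τ t)) / homothetySq τ t

def kidderVelocity (τ R t : ℝ) : ℝ := -(t * R) / (τ ^ 2 * homothetySq τ t)

theorem homothetySq_pos {τ t : ℝ} (ht : t ∈ Set.Ioo (-τ) τ) : 0 < homothetySq τ t := by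
  have hτ : 0 < τ := by linarith [ht.1, ht.2]
  rw [homothetySq, sub_pos, div_lt_one (by positivity)]
  exact sq_lt_sq' ht.1 ht.2

theorem quadratic_profile_div_sq_eq_kidderDensity {ρ₀ : ℝ → ℝ} {C A τ R t h : ℝ}
    (hρ₀ : ∀ r, ρ₀ r = C + A * r ^ 2) (hh : h ^ 2 = homothetySq τ t) :
    ρ₀ (R / h) / h ^ 2 = kidderDensity C A τ R t := by
  rw [hρ₀, div_pow, hh, kidderDensity]

theorem hasDerivAt_homothetySq (τ t : ℝ) :
    HasDerivAt (homothetySq τ) (-(2 * t / τ ^ 2)) t :=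
  (((hasDerivAt_pow 2 t).div_const (τ ^ 2)).const_sub 1).congr_deriv (by ring)

theorem hasDerivAt_kidderDensity_time (C A τ R t : ℝ) (hg : homothetySq τ t ≠ 0) :
    HasDerivAt (kidderDensity C A τ R)
      (2 * t * (C * homothetySq τ t + 2 * A * R ^ 2) / (τ ^ 2 * homothetySq τ t ^ 3)) t := by
  have hG := hasDerivAt_homothetySq τ t
  refine ((((hasDerivAt_const t (R ^ 2)).fun_div hG hg).const_mul A).const_add C |>.fun_div hG hg)
    |>.congr_deriv ?_
  field_simp
  ring

theorem hasDerivAt_kidderDensity_radius (C A τ R t : ℝ) :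
    HasDerivAt (fun r => kidderDensity C A τ r t) (2 * A * R / homothetySq τ t ^ 2) R :=
  ((((hasDerivAt_pow 2 R).div_const (homothetySq τ t)).const_mul A).const_add C
    |>.div_const (homothetySq τ t)).congr_deriv (by ring)

theorem hasDerivAt_kidderVelocity_time (τ R t : ℝ) (hτ : τ ≠ 0) (hg : homothetySq τ t ≠ 0) :
    HasDerivAt (kidderVelocity τ R)
      (-(R * (τ ^ 2 * homothetySq τ t + 2 * t ^ 2)) / (τ ^ 4 * homothetySq τ t ^ 2)) t := by
  refine ((hasDerivAt_mul_const R).neg.fun_div ((hasDerivAt_homothetySq τ t).const_mul (τ ^ 2))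
    (mul_ne_zero (pow_ne_zero 2 hτ) hg)).congr_deriv ?_
  simp only [Pi.neg_apply]
  field_simp
  ring

theorem hasDerivAt_kidderVelocity_radius (τ R t : ℝ) :
    HasDerivAt (fun r => kidderVelocity τ r t) (-t / (τ ^ 2 * homothetySq τ t)) R :=
  (((hasDerivAt_id' R).const_mul t).neg.div_const (τ ^ 2 * homothetySq τ t)).congr_deriv (by ring)

theorem kidder_continuity_equation (C A τ R t : ℝ) (hg : homothetySq τ t ≠ 0) (hR : R ≠ 0) :
    dT (kidderDensity C A τ) R t
      + 1 / R * dR (fun r s => r * kidderDensity C A τ r s * kidderVelocity τ r s) R t = 0 := by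
  have hflux := ((hasDerivAt_id' R).fun_mul (hasDerivAt_kidderDensity_radius C A τ R t)).fun_mul
    (hasDerivAt_kidderVelocity_radius τ R t)
  rw [dT, dR, (hasDerivAt_kidderDensity_time C A τ R t hg).deriv, hflux.deriv]
  simp only [kidderDensity, kidderVelocity]
  field_simp
  ring

theorem kidder_momentum_equation (C A τ R t : ℝ) (hτ : τ ≠ 0) (hg : homothetySq τ t ≠ 0)
    (hA : A = 1 / (4 * τ ^ 2)) (hρ : kidderDensity C A τ R t ≠ 0) :
    dT (kidderVelocity τ) R t + kidderVelocity τ R t * dR (kidderVelocity τ) R t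
      + 1 / kidderDensity C A τ R t * dR (fun r s => kidderDensity C A τ r s ^ 2) R t = 0 := by
  have hpressure := (hasDerivAt_kidderDensity_radius C A τ R t).fun_pow 2
  have hforce : 1 / kidderDensity C A τ R t * (2 * kidderDensity C A τ R t ^ (2 - 1)
      * (2 * A * R / homothetySq τ t ^ 2)) = 4 * A * R / homothetySq τ t ^ 2 := by
    field_simp
    ring
  have hτg : τ ^ 2 * homothetySq τ t + t ^ 2 = τ ^ 2 := by
    simp only [homothetySq]
    field_simp
    ring
  rw [dT, dR, dR, (hasDerivAt_kidderVelocity_time τ R t hτ hg).deriv,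
    (hasDerivAt_kidderVelocity_radius τ R t).deriv, hpressure.deriv, Nat.cast_ofNat, hforce, hA]
  simp only [kidderVelocity]
  field_simp
  linear_combination (-R) * hτg

theorem kidder_euler_of_eventuallyEq {ρ U p : ℝ → ℝ → ℝ} {C A τ R t : ℝ}
    (hfields : ∀ᶠ s in 𝓝 t, ∀ r, ρ r s = kidderDensity C A τ r s ∧ U r s = kidderVelocity τ r s)
    (hp : ∀ r s, p r s = ρ r s ^ 2) (hτ : τ ≠ 0) (hg : homothetySq τ t ≠ 0)
    (hA : A = 1 / (4 * τ ^ 2)) (hR : R ≠ 0) (hρ : kidderDensity C A τ R t ≠ 0) :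
    (dT ρ R t + (1 / R) * dR (fun a b => a * ρ a b * U a b) R t = 0) ∧
      (dT U R t + U R t * dR U R t + (1 / ρ R t) * dR p R t = 0) := by
  have hdensity := hfields.mono fun s hs r => (hs r).1
  have hvelocity := hfields.mono fun s hs r => (hs r).2
  have hflux : ∀ᶠ s in 𝓝 t, ∀ r,
      r * ρ r s * U r s = r * kidderDensity C A τ r s * kidderVelocity τ r s :=
    hfields.mono fun s hs r => by rw [(hs r).1, (hs r).2]
  have hpressure : ∀ᶠ s in 𝓝 t, ∀ r, p r s = kidderDensity C A τ r s ^ 2 :=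
    hfields.mono fun s hs r => by rw [hp, (hs r).1]
  rw [dT_congr hdensity, dR_congr hflux, dT_congr hvelocity, dR_congr hvelocity,
    dR_congr hpressure, hdensity.self_of_nhds, hvelocity.self_of_nhds]
  exact ⟨kidder_continuity_equation C A τ R t hg hR,
    kidder_momentum_equation C A τ R t hτ hg hA hρ⟩

theorem kidderDensity_pos {C A τ R t r : ℝ} (hA : 0 ≤ A) (hg : 0 < homothetySq τ t)
    (hr : homothetySq τ t * r ^ 2 ≤ R ^ 2) (hC : 0 < C + A * r ^ 2) :
    0 < kidderDensity C A τ R t := by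
  have hrR : r ^ 2 ≤ R ^ 2 / homothetySq τ t := (le_div_iff₀' hg).mpr hr
  exact div_pos (by nlinarith [mul_le_mul_of_nonneg_left hrR hA]) hg

theorem kidder_focal_relation {r_i r_e ρ_i ρ_e τ : ℝ} (hτ_pos : 0 < τ)
    (hτ : τ = √((2 - 1) / 2 * (r_e ^ 2 - r_i ^ 2) / (2 * ρ_e - 2 * ρ_i))) :
    (ρ_e - ρ_i) / (r_e ^ 2 - r_i ^ 2) = 1 / (4 * τ ^ 2) := by
  have harg := (Real.sqrt_pos.mp (hτ ▸ hτ_pos)).le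
  rw [hτ, Real.sq_sqrt harg, show 2 * ρ_e - 2 * ρ_i = 2 * (ρ_e - ρ_i) by ring]
  simp only [div_eq_mul_inv, mul_inv, inv_inv]
  ring

theorem kidder_self_similar_solution_general
    (r_i r_e ρ_i ρ_e : ℝ)
    (hri : 0 < r_i) (hρi : 0 < ρ_i)
    (γ : ℝ) (hγ : γ = 2)
    (ρ₀ : ℝ → ℝ)
    (hρ₀ : ∀ r, ρ₀ r = ρ_i + ((r ^ 2 - r_i ^ 2) / (r_e ^ 2 - r_i ^ 2)) * (ρ_e - ρ_i))
    (ci2 ce2 : ℝ) (hci2 : ci2 = γ * ρ_i) (hce2 : ce2 = γ * ρ_e)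
    (τ : ℝ) (hτ : τ = Real.sqrt (((γ - 1) / 2) * (r_e ^ 2 - r_i ^ 2) / (ce2 - ci2)))
    (h : ℝ → ℝ) (hh : ∀ t, h t = Real.sqrt (1 - t ^ 2 / τ ^ 2))
    (ρ U p : ℝ → ℝ → ℝ)
    (hρ : ∀ R t, ρ R t = ρ₀ (R / h t) / (h t) ^ 2)
    (hU : ∀ R t, U R t = -(t * R) / (τ ^ 2 * (h t) ^ 2))
    (hp : ∀ R t, p R t = (ρ R t) ^ 2) :
    ∀ t : ℝ, 0 ≤ t → t < τ → ∀ R : ℝ, h t * r_i ≤ R → R ≤ h t * r_e →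
      (dT ρ R t + (1 / R) * dR (fun a b => a * ρ a b * U a b) R t = 0) ∧
      (dT U R t + U R t * dR U R t + (1 / ρ R t) * dR p R t = 0) := by
  intro t ht0 htτ R hRi _
  subst hγ hci2 hce2
  set A := (ρ_e - ρ_i) / (r_e ^ 2 - r_i ^ 2)
  have hτ_pos : 0 < τ := ht0.trans_lt htτ
  have hA : A = 1 / (4 * τ ^ 2) := kidder_focal_relation hτ_pos hτ
  have hprofile : ∀ r, ρ₀ r = (ρ_i - A * r_i ^ 2) + A * r ^ 2 := fun r => by rw [hρ₀]; ring
  have hh_sq : ∀ s ∈ Set.Ioo (-τ) τ, h s ^ 2 = homothetySq τ s := fun s hs =>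
    (hh s).symm ▸ Real.sq_sqrt (homothetySq_pos hs).le
  have ht : t ∈ Set.Ioo (-τ) τ := ⟨by linarith, htτ⟩
  have hfields : ∀ᶠ s in 𝓝 t, ∀ r, ρ r s = kidderDensity (ρ_i - A * r_i ^ 2) A τ r s ∧
      U r s = kidderVelocity τ r s := by
    filter_upwards [isOpen_Ioo.mem_nhds ht] with s hs r
    rw [hρ, hU, quadratic_profile_div_sq_eq_kidderDensity hprofile (hh_sq s hs), hh_sq s hs,
      kidderVelocity]
    exact ⟨rfl, rfl⟩
  have hg := homothetySq_pos ht
  have hhr_pos : 0 < h t * r_i := mul_pos ((hh t).symm ▸ Real.sqrt_pos.mpr hg) hri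
  have hRr : homothetySq τ t * r_i ^ 2 ≤ R ^ 2 := by
    rw [← hh_sq t ht, ← mul_pow]
    exact pow_le_pow_left₀ hhr_pos.le hRi 2
  have hρ_pos : 0 < kidderDensity (ρ_i - A * r_i ^ 2) A τ R t :=
    kidderDensity_pos (hA ▸ by positivity) hg hRr (by simpa using hρi)
  exact kidder_euler_of_eventuallyEq hfields hp hτ_pos.ne' hg.ne' hA (hhr_pos.trans_le hRi).ne'
    hρ_pos.ne'

/-- Kidder's self-similar isentropic compression of a cylindrical shell
(γ = 2, uniform entropy s₀ = 1, so p = ρ²) satisfies the cylindrically symmetric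
isentropic Euler equations at every point of the shell for 0 ≤ t < τ. -/
theorem kidder_self_similar_solution
    (r_i r_e ρ_i ρ_e : ℝ)
    (hri : 0 < r_i) (hrie : r_i < r_e) (hρi : 0 < ρ_i) (hρie : ρ_i < ρ_e)
    (γ : ℝ) (hγ : γ = 2)
    (ρ₀ : ℝ → ℝ)
    (hρ₀ : ∀ r, ρ₀ r = ρ_i + ((r ^ 2 - r_i ^ 2) / (r_e ^ 2 - r_i ^ 2)) * (ρ_e - ρ_i))
    (ci2 ce2 : ℝ) (hci2 : ci2 = γ * ρ_i) (hce2 : ce2 = γ * ρ_e)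
    (τ : ℝ) (hτ : τ = Real.sqrt (((γ - 1) / 2) * (r_e ^ 2 - r_i ^ 2) / (ce2 - ci2)))
    (h : ℝ → ℝ) (hh : ∀ t, h t = Real.sqrt (1 - t ^ 2 / τ ^ 2))
    (ρ U p : ℝ → ℝ → ℝ)
    (hρ : ∀ R t, ρ R t = ρ₀ (R / h t) / (h t) ^ 2)
    (hU : ∀ R t, U R t = -(t * R) / (τ ^ 2 * (h t) ^ 2))
    (hp : ∀ R t, p R t = (ρ R t) ^ 2) :
    ∀ t : ℝ, 0 ≤ t → t < τ → ∀ R : ℝ, h t * r_i ≤ R → R ≤ h t * r_e →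
      (dT ρ R t + (1 / R) * dR (fun a b => a * ρ a b * U a b) R t = 0) ∧
      (dT U R t + U R t * dR U R t + (1 / ρ R t) * dR p R t = 0) :=
  kidder_self_similar_solution_general r_i r_e ρ_i ρ_e hri hρi γ hγ ρ₀ hρ₀ ci2 ce2 hci2 hce2 τ hτ h
    hh ρ U p hρ hU hp
end
end
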